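/- arXiv:2605.12106 — 2 statements merged into one kernel-verified Lean document; each statement's English description precedes it below -/
import Mathlib

section
/- Let X ⊆ ℝⁿ be nonempty, compact and convex, and let f₁, f₂ be continuously differentiable and μ-strongly convex on a neighborhood of X with μ > 0. Let G = sup_{x ∈ X} ‖∇f₁(x) - ∇f₂(x)‖₂, and for λ ∈ [0,1] let x(λ) be the unique minimizer of F_λ = λf₁ + (1-λ)f₂ over X. Then for all λ, λ' ∈ [0,1], ‖x(λ) - x(λ')‖₂ ≤ (G/μ)|λ - λ'|, i.e., the Pareto solution path is (G/μ)-Lipschitz in λ. -/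
open Set

section Aux

variable {E : Type*} [NormedAddCommGroup E] [InnerProductSpace ℝ E] [CompleteSpace E]

local notation "⟪" x ", " y "⟫" => @inner ℝ _ _ x y

/-- Derivative of a function along a line, in terms of its gradient. -/
lemma aux_hasDerivAt_line {Φ : E → ℝ} {g : E} {x v : E} {t : ℝ}
    (hΦ : HasGradientAt Φ g (x + t • v)) :
    HasDerivAt (fun s : ℝ => Φ (x + s • v)) ⟪g, v⟫ t := by
  have hline : HasDerivAt (fun s : ℝ => x + s • v) v t := by
    simpa using ((hasDerivAt_id t).smul_const v).const_add x
  have hF := (hasGradientAt_iff_hasFDerivAt.mp hΦ)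
  have := hF.comp_hasDerivAt t hline
  simp [InnerProductSpace.toDual_apply_apply] at this
  exact this

/-- Strong monotonicity of the gradient of a strongly convex function. -/
lemma aux_strong_mono {Φ : E → ℝ} {U : Set E} {μ : ℝ} {gr : E → E}
    (hsc : StrongConvexOn U μ Φ)
    (hgr : ∀ z, HasGradientAt Φ (gr z) z)
    {x y : E} (hx : x ∈ U) (hy : y ∈ U) :
    μ * ‖y - x‖ ^ 2 ≤ ⟪gr y - gr x, y - x⟫ := by
  set v := y - x with hv
  set c := μ * ‖v‖ ^ 2 with hc
  -- the function h t = Φ (x + t v) - c/2 t² is convex on [0,1]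
  have hmem : ∀ s : ℝ, s ∈ Icc (0:ℝ) 1 → x + s • v ∈ U := by
    intro s hs
    have : x + s • v = (1 - s) • x + s • y := by rw [hv]; module
    rw [this]
    exact hsc.1 hx hy (by linarith [hs.2]) hs.1 (by ring)
  have hconv : ConvexOn ℝ (Icc (0:ℝ) 1)
      (fun t : ℝ => Φ (x + t • v) - c / 2 * t ^ 2) := by
    refine ⟨convex_Icc _ _, ?_⟩
    intro s hs t ht a b ha hb hab
    have hp := hmem s hs
    have hq := hmem t ht
    have key := hsc.2 hp hq ha hb hab
    have hcombo : a • (x + s • v) + b • (x + t • v) = x + (a * s + b * t) • v := by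
      have h1 : a + b = 1 := hab
      match_scalars <;> nlinarith [h1]
    rw [hcombo] at key
    have hnorm : ‖(x + s • v) - (x + t • v)‖ = |s - t| * ‖v‖ := by
      have : (x + s • v) - (x + t • v) = (s - t) • v := by module
      rw [this, norm_smul, Real.norm_eq_abs]
    rw [hnorm] at key
    simp only [smul_eq_mul] at key ⊢
    have habs : (|s - t| * ‖v‖) ^ 2 = (s - t) ^ 2 * ‖v‖ ^ 2 := by
      rw [mul_pow, sq_abs]
    rw [habs] at key
    rw [hc]
    have hb' : b = 1 - a := by linarith
    subst hb'
    nlinarith [key]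
  -- derivatives of h at 0 and 1
  have hd : ∀ t : ℝ, HasDerivAt (fun t : ℝ => Φ (x + t • v) - c / 2 * t ^ 2)
      (⟪gr (x + t • v), v⟫ - c / 2 * (2 * t ^ 1)) t := by
    intro t
    exact (aux_hasDerivAt_line (hgr (x + t • v))).sub
      ((hasDerivAt_pow 2 t).const_mul (c / 2))
  have h0 := hd 0
  have h1 := hd 1
  have e0 : x + (0:ℝ) • v = x := by simp
  have e1 : x + (1:ℝ) • v = y := by rw [hv]; module
  rw [e0] at h0
  rw [e1] at h1
  have hle1 := hconv.le_slope_of_hasDerivAt (left_mem_Icc.mpr zero_le_one)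
    (right_mem_Icc.mpr zero_le_one) zero_lt_one h0
  have hle2 := hconv.slope_le_of_hasDerivAt (left_mem_Icc.mpr zero_le_one)
    (right_mem_Icc.mpr zero_le_one) zero_lt_one h1
  have hchain : ⟪gr x, v⟫ - c / 2 * (2 * (0:ℝ) ^ 1) ≤
      ⟪gr y, v⟫ - c / 2 * (2 * (1:ℝ) ^ 1) := le_trans hle1 hle2
  have : c ≤ ⟪gr y, v⟫ - ⟪gr x, v⟫ := by
    simp only [pow_one, mul_zero, mul_one, sub_zero] at hchain
    linarith
  rw [inner_sub_left]
  rw [hc] at this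
  linarith

/-- First-order optimality condition for minimization over a convex set. -/
lemma aux_opt {Φ : E → ℝ} {g : E} {X : Set E} {x y : E}
    (hXconv : Convex ℝ X) (hmin : IsMinOn Φ X x) (hx : x ∈ X) (hy : y ∈ X)
    (hΦ : HasGradientAt Φ g x) :
    (0:ℝ) ≤ ⟪g, y - x⟫ := by
  have hcone : y - x ∈ posTangentConeAt X x :=
    sub_mem_posTangentConeAt_of_segment_subset (hXconv.segment_subset hx hy)
  have := hmin.localize.hasFDerivWithinAt_nonneg
    (hasGradientAt_iff_hasFDerivAt.mp hΦ).hasFDerivWithinAt hcone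
  simpa [InnerProductSpace.toDual_apply_apply] using this

/-- A convex combination of two μ-strongly convex functions is μ-strongly convex. -/
lemma aux_combo_sc {f₁ f₂ : E → ℝ} {U : Set E} {μ l : ℝ}
    (hsc₁ : StrongConvexOn U μ f₁) (hsc₂ : StrongConvexOn U μ f₂)
    (hl0 : 0 ≤ l) (hl1 : l ≤ 1) :
    StrongConvexOn U μ (fun y => l * f₁ y + (1 - l) * f₂ y) := by
  refine ⟨hsc₁.1, ?_⟩
  intro x hx y hy a b ha hb hab
  have h1 := hsc₁.2 hx hy ha hb hab
  have h2 := hsc₂.2 hx hy ha hb hab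
  simp only [smul_eq_mul] at h1 h2 ⊢
  nlinarith [mul_le_mul_of_nonneg_left h1 hl0,
    mul_le_mul_of_nonneg_left h2 (by linarith : (0:ℝ) ≤ 1 - l)]

/-- Gradient of a linear combination. -/
lemma aux_grad_combo {f₁ f₂ : E → ℝ} (a b : ℝ) {z : E}
    (h₁ : DifferentiableAt ℝ f₁ z) (h₂ : DifferentiableAt ℝ f₂ z) :
    HasGradientAt (fun y => a * f₁ y + b * f₂ y)
      (a • gradient f₁ z + b • gradient f₂ z) z := by
  have H₁ := hasGradientAt_iff_hasFDerivAt.mp h₁.hasGradientAt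
  have H₂ := hasGradientAt_iff_hasFDerivAt.mp h₂.hasGradientAt
  rw [hasGradientAt_iff_hasFDerivAt]
  have := (H₁.const_mul a).add (H₂.const_mul b)
  exact this.congr_fderiv (by simp [map_add, map_smul])

end Aux

/-- Lipschitz continuity of the Pareto solution path: with
`G = sup_{x ∈ X} ‖∇f₁(x) - ∇f₂(x)‖` and `x(λ)` the (unique) minimizer of
`F_λ = λ f₁ + (1-λ) f₂` over `X`, we have `‖x(λ) - x(λ')‖ ≤ (G/μ)|λ - λ'|`. -/
theorem stmt1 {n : ℕ} (X : Set (EuclideanSpace ℝ (Fin n)))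
    (hXne : X.Nonempty) (hXc : IsCompact X) (hXconv : Convex ℝ X)
    (f₁ f₂ : EuclideanSpace ℝ (Fin n) → ℝ) (μ : ℝ) (hμ : 0 < μ)
    (U : Set (EuclideanSpace ℝ (Fin n))) (hU : IsOpen U) (hXU : X ⊆ U)
    (hf₁ : ContDiff ℝ 1 f₁) (hf₂ : ContDiff ℝ 1 f₂)
    (hsc₁ : StrongConvexOn U μ f₁) (hsc₂ : StrongConvexOn U μ f₂)
    (G : ℝ) (hG : G = ⨆ x ∈ X, ‖gradient f₁ x - gradient f₂ x‖)
    (xmin : ℝ → EuclideanSpace ℝ (Fin n))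
    (hxmin : ∀ l ∈ Icc (0:ℝ) 1, xmin l ∈ X ∧
      IsMinOn (fun y => l * f₁ y + (1 - l) * f₂ y) X (xmin l))
    (hxuniq : ∀ l ∈ Icc (0:ℝ) 1, ∀ z ∈ X,
      IsMinOn (fun y => l * f₁ y + (1 - l) * f₂ y) X z → z = xmin l) :
    ∀ l ∈ Icc (0:ℝ) 1, ∀ l' ∈ Icc (0:ℝ) 1,
      ‖xmin l - xmin l'‖ ≤ (G / μ) * |l - l'| := by
  have hd₁ : Differentiable ℝ f₁ := hf₁.differentiable one_ne_zero
  have hd₂ : Differentiable ℝ f₂ := hf₂.differentiable one_ne_zero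
  set g₁ := gradient f₁ with hg₁
  set g₂ := gradient f₂ with hg₂
  -- continuity of the gradient gap
  have hcont : Continuous fun z => ‖g₁ z - g₂ z‖ := by
    have c₁ : Continuous g₁ := by
      rw [hg₁]
      unfold gradient
      exact (InnerProductSpace.toDual ℝ _).symm.continuous.comp
        (hf₁.continuous_fderiv one_ne_zero)
    have c₂ : Continuous g₂ := by
      rw [hg₂]
      unfold gradient
      exact (InnerProductSpace.toDual ℝ _).symm.continuous.comp
        (hf₂.continuous_fderiv one_ne_zero)
    exact (c₁.sub c₂).norm
  -- G bounds the gradient gap on X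
  have hGbound : ∀ z ∈ X, ‖g₁ z - g₂ z‖ ≤ G := by
    obtain ⟨C, hC⟩ := (hXc.image_of_continuousOn hcont.continuousOn).bddAbove
    have hbdd : BddAbove (Set.range fun x => ⨆ _ : x ∈ X, ‖g₁ x - g₂ x‖) := by
      refine ⟨max C 0, ?_⟩
      rintro _ ⟨x, rfl⟩
      dsimp only
      by_cases hx : x ∈ X
      · rw [ciSup_pos hx]
        exact le_sup_of_le_left (hC ⟨x, hx, rfl⟩)
      · haveI : IsEmpty (x ∈ X) := ⟨hx⟩
        rw [Real.iSup_of_isEmpty]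
        exact le_sup_right
    intro z hz
    rw [hG]
    calc ‖g₁ z - g₂ z‖ = ⨆ _ : z ∈ X, ‖g₁ z - g₂ z‖ :=
          (ciSup_pos (f := fun _ : z ∈ X => ‖g₁ z - g₂ z‖) hz).symm
      _ ≤ ⨆ x ∈ X, ‖g₁ x - g₂ x‖ := le_ciSup hbdd z
  have hG0 : 0 ≤ G := by
    obtain ⟨z, hz⟩ := hXne
    exact le_trans (norm_nonneg _) (hGbound z hz)
  -- main argument
  intro l hl l' hl'
  obtain ⟨hx, hxm⟩ := hxmin l hl
  obtain ⟨hx', hxm'⟩ := hxmin l' hl'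
  set x := xmin l
  set x' := xmin l'
  set d := x' - x with hd
  -- gradients of the combinations
  have hGl : ∀ z, HasGradientAt (fun y => l * f₁ y + (1 - l) * f₂ y)
      (l • g₁ z + (1 - l) • g₂ z) z := fun z => aux_grad_combo l (1 - l) (hd₁ z) (hd₂ z)
  have hGl' : ∀ z, HasGradientAt (fun y => l' * f₁ y + (1 - l') * f₂ y)
      (l' • g₁ z + (1 - l') • g₂ z) z := fun z => aux_grad_combo l' (1 - l') (hd₁ z) (hd₂ z)
  -- optimality conditions
  have hA : (0:ℝ) ≤ inner ℝ (l • g₁ x + (1 - l) • g₂ x) d :=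
    aux_opt hXconv hxm hx hx' (hGl x)
  have hB : (0:ℝ) ≤ inner ℝ (l' • g₁ x' + (1 - l') • g₂ x') (x - x') :=
    aux_opt hXconv hxm' hx' hx (hGl' x')
  -- strong monotonicity for F_l
  have hsc : StrongConvexOn U μ (fun y => l * f₁ y + (1 - l) * f₂ y) :=
    aux_combo_sc hsc₁ hsc₂ hl.1 hl.2
  have hC : μ * ‖d‖ ^ 2 ≤
      inner ℝ ((l • g₁ x' + (1 - l) • g₂ x') - (l • g₁ x + (1 - l) • g₂ x)) d :=
    aux_strong_mono hsc hGl (hXU hx) (hXU hx')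
  -- Cauchy-Schwarz bound
  have hCS : |(inner ℝ (g₁ x' - g₂ x') d : ℝ)| ≤ G * ‖d‖ := by
    calc |(inner ℝ (g₁ x' - g₂ x') d : ℝ)| ≤ ‖g₁ x' - g₂ x'‖ * ‖d‖ :=
          abs_real_inner_le_norm _ _
      _ ≤ G * ‖d‖ := mul_le_mul_of_nonneg_right (hGbound x' hx') (norm_nonneg _)
  -- combine everything
  have hxd : x - x' = -d := by rw [hd]; abel
  rw [hxd] at hB
  -- expand inner products into basic ones
  set p₁ : ℝ := inner ℝ (g₁ x) d
  set p₂ : ℝ := inner ℝ (g₂ x) d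
  set q₁ : ℝ := inner ℝ (g₁ x') d
  set q₂ : ℝ := inner ℝ (g₂ x') d
  have eA : (inner ℝ (l • g₁ x + (1 - l) • g₂ x) d : ℝ) = l * p₁ + (1 - l) * p₂ := by
    rw [inner_add_left, real_inner_smul_left, real_inner_smul_left]
  have eB : (inner ℝ (l' • g₁ x' + (1 - l') • g₂ x') (-d) : ℝ)
      = -(l' * q₁ + (1 - l') * q₂) := by
    rw [inner_neg_right, inner_add_left, real_inner_smul_left, real_inner_smul_left]
  have eC : (inner ℝ ((l • g₁ x' + (1 - l) • g₂ x') - (l • g₁ x + (1 - l) • g₂ x)) d : ℝ)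
      = (l * q₁ + (1 - l) * q₂) - (l * p₁ + (1 - l) * p₂) := by
    rw [inner_sub_left, inner_add_left, inner_add_left, real_inner_smul_left,
      real_inner_smul_left, real_inner_smul_left, real_inner_smul_left]
  have eCS : (inner ℝ (g₁ x' - g₂ x') d : ℝ) = q₁ - q₂ := by
    rw [inner_sub_left]
  rw [eA] at hA
  rw [eB] at hB
  rw [eC] at hC
  rw [eCS] at hCS
  -- key scalar inequality : μ ‖d‖² ≤ |l - l'| * G * ‖d‖
  have habs : |l - l'| * (q₁ - q₂) ≤ |l - l'| * |q₁ - q₂| :=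
    mul_le_mul_of_nonneg_left (le_abs_self _) (abs_nonneg _)
  have key : μ * ‖d‖ ^ 2 ≤ |l - l'| * (G * ‖d‖) := by
    have h1 : μ * ‖d‖ ^ 2 ≤ (l - l') * (q₁ - q₂) := by nlinarith
    have h2 : (l - l') * (q₁ - q₂) ≤ |l - l'| * |q₁ - q₂| := by
      calc (l - l') * (q₁ - q₂) ≤ |(l - l') * (q₁ - q₂)| := le_abs_self _
        _ = |l - l'| * |q₁ - q₂| := abs_mul _ _
    have h3 : |l - l'| * |q₁ - q₂| ≤ |l - l'| * (G * ‖d‖) :=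
      mul_le_mul_of_nonneg_left hCS (abs_nonneg _)
    linarith
  -- conclude
  have hgoal : ‖x - x'‖ = ‖d‖ := by rw [hd, norm_sub_rev]
  rw [hgoal]
  rcases eq_or_lt_of_le (norm_nonneg d) with h0 | h0
  · rw [← h0]
    positivity
  · have hmuld : μ * ‖d‖ ≤ |l - l'| * G := by
      have := (mul_le_mul_iff_of_pos_right h0).mp (by nlinarith : μ * ‖d‖ * ‖d‖ ≤ (|l - l'| * G) * ‖d‖)
      linarith
    rw [div_mul_eq_mul_div, le_div_iff₀ hμ]
    calc ‖d‖ * μ = μ * ‖d‖ := mul_comm _ _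
      _ ≤ |l - l'| * G := hmuld
      _ = G * |l - l'| := mul_comm _ _
end

section
/- Let X ⊆ ℝⁿ be convex and let f : ℝⁿ → ℝ be differentiable and μ-strongly convex on a neighborhood of X with μ > 0. If x, x' ∈ X satisfy the variational inequalities ∇f(x)ᵀ(x' - x) ≥ 0 and g(x')ᵀ(x - x') ≥ 0 for some vector field g, where g = ∇f + e for a perturbation e with ‖e(x')‖₂ ≤ ε, then ‖x - x'‖₂ ≤ ε/μ. -/
open InnerProductSpace Filter Set Topology

/-- First-order lower bound for strongly convex differentiable functions. -/
lemma sc_grad_ineq {n : ℕ} {U : Set (EuclideanSpace ℝ (Fin n))}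
    {f : EuclideanSpace ℝ (Fin n) → ℝ} {μ : ℝ}
    (hsc : StrongConvexOn U μ f)
    {x y : EuclideanSpace ℝ (Fin n)} (hx : x ∈ U) (hy : y ∈ U)
    (hdx : DifferentiableAt ℝ f x) :
    (inner ℝ (gradient f x) (y - x) : ℝ) ≤ f y - f x - μ / 2 * ‖x - y‖ ^ 2 := by
  set v := y - x with hv
  have hfd : HasFDerivAt f (InnerProductSpace.toDual ℝ _ (gradient f x)) x :=
    hdx.hasGradientAt.hasFDerivAt
  have hline : HasDerivAt (fun t : ℝ => x + t • v) v 0 := by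
    simpa using ((hasDerivAt_id (0:ℝ)).smul_const v).const_add x
  have hcomp : HasDerivAt (fun t : ℝ => f (x + t • v))
      ((inner ℝ (gradient f x) v : ℝ)) 0 := by
    have hfd' : HasFDerivAt f (InnerProductSpace.toDual ℝ _ (gradient f x))
        ((fun t : ℝ => x + t • v) 0) := by simpa using hfd
    have := hfd'.comp_hasDerivAt (0:ℝ) hline
    exact this.congr_deriv (by rw [InnerProductSpace.toDual_apply_apply])
  set h : ℝ → ℝ := fun t => f (x + t • v) with hh
  have hslope : Tendsto (slope h 0) (𝓝[>] 0) (𝓝 (inner ℝ (gradient f x) v : ℝ)) :=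
    (hasDerivAt_iff_tendsto_slope.1 hcomp).mono_left
      (nhdsWithin_mono _ fun t ht => ne_of_gt ht)
  have hRHS : Tendsto (fun t : ℝ => f y - f x - (1 - t) * (μ / 2 * ‖x - y‖ ^ 2))
      (𝓝[>] 0) (𝓝 (f y - f x - μ / 2 * ‖x - y‖ ^ 2)) := by
    have : Tendsto (fun t : ℝ => f y - f x - (1 - t) * (μ / 2 * ‖x - y‖ ^ 2))
        (𝓝 0) (𝓝 (f y - f x - (1 - 0) * (μ / 2 * ‖x - y‖ ^ 2))) := by
      exact (tendsto_const_nhds.sub ((tendsto_const_nhds.sub tendsto_id).mul tendsto_const_nhds))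
    simpa using this.mono_left nhdsWithin_le_nhds
  have hev : slope h 0 ≤ᶠ[𝓝[>] (0:ℝ)]
      fun t => f y - f x - (1 - t) * (μ / 2 * ‖x - y‖ ^ 2) := by
    filter_upwards [Ioo_mem_nhdsGT_of_mem (by norm_num : (0:ℝ) ∈ Ico (0:ℝ) 1)]
      with t ht
    have hconv := hsc.2 hx hy (sub_nonneg.2 ht.2.le) ht.1.le (by ring)
    have hpt : x + t • v = (1 - t) • x + t • y := by
      rw [hv]; module
    have hht : h t ≤ (1 - t) * f x + t * f y - (1 - t) * t * (μ / 2 * ‖x - y‖ ^ 2) := by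
      simpa [hh, hpt, smul_eq_mul] using hconv
    have h0 : h 0 = f x := by simp [hh]
    rw [slope_def_field, sub_zero, div_le_iff₀ ht.1, h0]
    nlinarith [hht]
  exact le_of_tendsto_of_tendsto hslope hRHS hev

/-- perturbed variational inequalities under strong convexity.
If `x, x' ∈ X` (convex) satisfy `∇f(x)ᵀ(x' - x) ≥ 0` and `g(x')ᵀ(x - x') ≥ 0`
where `g = ∇f + e` with `‖e(x')‖ ≤ ε`, and `f` is differentiable and `μ`-strongly
convex on a neighborhood of `X`, then `‖x - x'‖ ≤ ε/μ`. -/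
theorem stmt14 {n : ℕ} (X U : Set (EuclideanSpace ℝ (Fin n)))
    (hXconv : Convex ℝ X) (hU : IsOpen U) (hXU : X ⊆ U)
    (f : EuclideanSpace ℝ (Fin n) → ℝ) (μ ε : ℝ) (hμ : 0 < μ) (hε : 0 ≤ ε)
    (hfd : ∀ y ∈ U, DifferentiableAt ℝ f y)
    (hsc : StrongConvexOn U μ f)
    (e : EuclideanSpace ℝ (Fin n) → EuclideanSpace ℝ (Fin n))
    (x x' : EuclideanSpace ℝ (Fin n)) (hx : x ∈ X) (hx' : x' ∈ X)
    (hvi1 : (0:ℝ) ≤ inner ℝ (gradient f x) (x' - x))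
    (hvi2 : (0:ℝ) ≤ inner ℝ (gradient f x' + e x') (x - x'))
    (he : ‖e x'‖ ≤ ε) :
    ‖x - x'‖ ≤ ε / μ := by
  have h1 := sc_grad_ineq hsc (hXU hx) (hXU hx') (hfd x (hXU hx))
  have h2 := sc_grad_ineq hsc (hXU hx') (hXU hx) (hfd x' (hXU hx'))
  -- strong monotonicity
  have hmono : μ * ‖x - x'‖ ^ 2 ≤ (inner ℝ (gradient f x - gradient f x') (x - x') : ℝ) := by
    have hsymm : ‖x' - x‖ = ‖x - x'‖ := norm_sub_rev _ _
    have e1 : (inner ℝ (gradient f x - gradient f x') (x - x') : ℝ)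
        = -(inner ℝ (gradient f x) (x' - x) : ℝ) - (inner ℝ (gradient f x') (x - x') : ℝ) := by
      rw [inner_sub_left]
      rw [show x - x' = -(x' - x) by abel, inner_neg_right]
    rw [e1]
    rw [hsymm] at h2
    linarith [h1, h2]
  have hinner2 : -(inner ℝ (gradient f x') (x - x') : ℝ) ≤ (inner ℝ (e x') (x - x') : ℝ) := by
    have := hvi2
    rw [inner_add_left] at this
    linarith
  have hkey : μ * ‖x - x'‖ ^ 2 ≤ ε * ‖x - x'‖ := by
    have hcs : (inner ℝ (e x') (x - x') : ℝ) ≤ ε * ‖x - x'‖ := by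
      calc (inner ℝ (e x') (x - x') : ℝ) ≤ ‖e x'‖ * ‖x - x'‖ := real_inner_le_norm _ _
        _ ≤ ε * ‖x - x'‖ := by gcongr
    have hvi1' : (inner ℝ (gradient f x) (x - x') : ℝ) ≤ 0 := by
      rw [show x - x' = -(x' - x) by abel, inner_neg_right]; linarith
    have : (inner ℝ (gradient f x - gradient f x') (x - x') : ℝ)
        ≤ ε * ‖x - x'‖ := by
      rw [inner_sub_left]; linarith
    linarith
  rcases eq_or_lt_of_le (norm_nonneg (x - x')) with h0 | h0
  · rw [← h0]; positivity
  · rw [le_div_iff₀ hμ]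
    nlinarith
end
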